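/- arXiv:2102.03970 — 2 statements merged into one kernel-verified Lean document; each statement's English description precedes it below -/
import Mathlib

section
/- Let μ ∈ [0,1), m_0 = 0, m_{p+1} = μ·m_p + g_p. Then for every P ≥ 1, Σ_{p=0}^{P-1} ‖m_{p+1}‖² ≤ (1/(1-μ)²) · Σ_{p=0}^{P-1} ‖g_p‖². -/
/-! By convexity of the square, `‖μ • x + y‖² ≤ μ ‖x‖² + ‖y‖² / (1 - μ)`, so
`aₚ = ‖mₚ‖²` satisfies `aₚ₊₁ ≤ μ aₚ + ‖gₚ‖² / (1 - μ)`. Summing over `p < P` and using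
`a₀ = 0` to bound `∑ aₚ` by `∑ aₚ₊₁` gives `(1 - μ) ∑ aₚ₊₁ ≤ ∑ ‖gₚ‖² / (1 - μ)`. -/

theorem norm_smul_add_sq_le {E : Type*} [SeminormedAddCommGroup E] [NormedSpace ℝ E]
    {μ : ℝ} (hμ0 : 0 ≤ μ) (hμ1 : μ < 1) (x y : E) :
    ‖μ • x + y‖ ^ 2 ≤ μ * ‖x‖ ^ 2 + ‖y‖ ^ 2 / (1 - μ) := by
  have hμ : 0 < 1 - μ := sub_pos.mpr hμ1
  have htriangle : ‖μ • x + y‖ ≤ μ * ‖x‖ + ‖y‖ := by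
    simpa [norm_smul, abs_of_nonneg hμ0] using norm_add_le (μ • x) y
  have hgap : μ * ‖x‖ ^ 2 + ‖y‖ ^ 2 / (1 - μ) - (μ * ‖x‖ + ‖y‖) ^ 2
      = μ / (1 - μ) * ((1 - μ) * ‖x‖ - ‖y‖) ^ 2 := by
    field_simp
    ring
  calc ‖μ • x + y‖ ^ 2 ≤ (μ * ‖x‖ + ‖y‖) ^ 2 := by gcongr
    _ ≤ μ * ‖x‖ ^ 2 + ‖y‖ ^ 2 / (1 - μ) := by
      have : 0 ≤ μ / (1 - μ) * ((1 - μ) * ‖x‖ - ‖y‖) ^ 2 := by positivity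
      linarith

theorem one_sub_mul_sum_range_le_of_le_mul_add {μ : ℝ} (hμ : 0 ≤ μ) {a c : ℕ → ℝ}
    (ha : ∀ p, 0 ≤ a p) (h0 : a 0 = 0) (hrec : ∀ p, a (p + 1) ≤ μ * a p + c p) (P : ℕ) :
    (1 - μ) * ∑ p ∈ Finset.range P, a (p + 1) ≤ ∑ p ∈ Finset.range P, c p := by
  have hsum : ∑ p ∈ Finset.range P, a (p + 1)
      ≤ μ * ∑ p ∈ Finset.range P, a p + ∑ p ∈ Finset.range P, c p := by
    rw [Finset.mul_sum, ← Finset.sum_add_distrib]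
    exact Finset.sum_le_sum fun p _ => hrec p
  have hshift : ∑ p ∈ Finset.range P, a p ≤ ∑ p ∈ Finset.range P, a (p + 1) := by
    have h₁ := Finset.sum_range_succ' a P
    have h₂ := Finset.sum_range_succ a P
    linarith [ha P]
  linarith [mul_le_mul_of_nonneg_left hshift hμ]

/-- Cumulative squared-norm bound for the momentum buffer:
    Σ_{p<P} ‖m_{p+1}‖² ≤ (1/(1-μ)²) Σ_{p<P} ‖g_p‖². -/
theorem momentum_cumulative_bound {d : ℕ} (μ : ℝ) (hμ : μ ∈ Set.Ico (0:ℝ) 1)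
    (m g : ℕ → EuclideanSpace ℝ (Fin d))
    (h0 : m 0 = 0) (hrec : ∀ p, m (p + 1) = μ • m p + g p) :
    ∀ P : ℕ, 1 ≤ P →
      ∑ p ∈ Finset.range P, ‖m (p + 1)‖ ^ 2 ≤
        (1 / (1 - μ) ^ 2) * ∑ p ∈ Finset.range P, ‖g p‖ ^ 2 := by
  obtain ⟨hμ0, hμ1⟩ := hμ
  have hμ : 0 < 1 - μ := sub_pos.mpr hμ1
  intro P _
  have hbound := one_sub_mul_sum_range_le_of_le_mul_add hμ0 (fun p => sq_nonneg ‖m p‖)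
    (by simp [h0]) (fun p => hrec p ▸ norm_smul_add_sq_le hμ0 hμ1 (m p) (g p)) P
  rw [← Finset.sum_div] at hbound
  rw [div_mul_eq_mul_div, one_mul, le_div_iff₀ (by positivity)]
  calc (∑ p ∈ Finset.range P, ‖m (p + 1)‖ ^ 2) * (1 - μ) ^ 2
      = (1 - μ) * ((1 - μ) * ∑ p ∈ Finset.range P, ‖m (p + 1)‖ ^ 2) := by ring
    _ ≤ (1 - μ) * ((∑ p ∈ Finset.range P, ‖g p‖ ^ 2) / (1 - μ)) := by gcongr
    _ = ∑ p ∈ Finset.range P, ‖g p‖ ^ 2 := mul_div_cancel₀ _ hμ.ne'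
end

section
/- In the setting of the previous statement, suppose ‖g^{(k)}_{p} - ḡ_p‖ ≤ D for all k, p, where ḡ_p = (1/K)Σ_j g^{(j)}_p. Then for all p ≤ P, (1/K) Σ_k ‖x̄_p - x^{(k)}_p‖² ≤ η²P²D²/(1-μ)². -/
/-- Divergence bound for local momentum SGD with bounded gradient deviation. -/
theorem client_divergence_bound {d K : ℕ} (hK : 0 < K)
    (η μ D : ℝ) (hμ : μ ∈ Set.Ico (0:ℝ) 1)
    (x0 : EuclideanSpace ℝ (Fin d))
    (x m : Fin K → ℕ → EuclideanSpace ℝ (Fin d))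
    (g : Fin K → ℕ → EuclideanSpace ℝ (Fin d))
    (hx0 : ∀ k, x k 0 = x0)
    (hm0 : ∀ k, m k 0 = 0)
    (hmrec : ∀ k p, m k (p + 1) = μ • m k p + g k p)
    (hxrec : ∀ k p, x k (p + 1) = x k p - η • m k (p + 1))
    (P : ℕ)
    (hdev : ∀ (k : Fin K) (p : ℕ),
      ‖g k p - (K : ℝ)⁻¹ • ∑ j, g j p‖ ≤ D) :
    ∀ p ≤ P,
      (K : ℝ)⁻¹ * ∑ k, ‖(K : ℝ)⁻¹ • (∑ j, x j p) - x k p‖ ^ 2 ≤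
        η ^ 2 * P ^ 2 * D ^ 2 / (1 - μ) ^ 2 := by
  obtain ⟨hμ0, hμ1⟩ := hμ
  have hK' : (0:ℝ) < K := by exact_mod_cast hK
  have h1μ : (0:ℝ) < 1 - μ := by linarith
  have hD : 0 ≤ D := le_trans (norm_nonneg _) (hdev ⟨0, hK⟩ 0)
  set gb : ℕ → EuclideanSpace ℝ (Fin d) := fun q => (K:ℝ)⁻¹ • ∑ j, g j q with hgb
  set mb : ℕ → EuclideanSpace ℝ (Fin d) := fun q => (K:ℝ)⁻¹ • ∑ j, m j q with hmb
  set xb : ℕ → EuclideanSpace ℝ (Fin d) := fun q => (K:ℝ)⁻¹ • ∑ j, x j q with hxb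
  have hmb0 : mb 0 = 0 := by simp [hmb, hm0]
  have hmbrec : ∀ q, mb (q+1) = μ • mb q + gb q := by
    intro q
    have hs : ∑ j, m j (q+1) = μ • ∑ j, m j q + ∑ j, g j q := by
      simp [hmrec, Finset.sum_add_distrib, Finset.smul_sum]
    simp only [hmb, hgb, hs, smul_add, smul_comm ((K:ℝ)⁻¹) μ]
  have hxbrec : ∀ q, xb (q+1) = xb q - η • mb (q+1) := by
    intro q
    have hs : ∑ j, x j (q+1) = ∑ j, x j q - η • ∑ j, m j (q+1) := by
      simp [hxrec, Finset.sum_sub_distrib, Finset.smul_sum]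
    simp only [hxb, hmb, hs, smul_sub, smul_comm ((K:ℝ)⁻¹) η]
  have hxb0 : xb 0 = x0 := by
    simp only [hxb, hx0, Finset.sum_const, Finset.card_fin]
    rw [← Nat.cast_smul_eq_nsmul ℝ, smul_smul, inv_mul_cancel₀ (ne_of_gt hK'), one_smul]
  have hM : ∀ (k : Fin K) q, ‖m k q - mb q‖ ≤ D / (1 - μ) := by
    intro k q
    induction q with
    | zero => simp [hm0, hmb0]; positivity
    | succ q ih =>
        have he : m k (q+1) - mb (q+1) = μ • (m k q - mb q) + (g k q - gb q) := by
          rw [hmrec, hmbrec]; module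
        calc ‖m k (q+1) - mb (q+1)‖ ≤ ‖μ • (m k q - mb q)‖ + ‖g k q - gb q‖ := by
              rw [he]; exact norm_add_le _ _
          _ ≤ μ * (D / (1-μ)) + D := by
              rw [norm_smul, Real.norm_eq_abs, abs_of_nonneg hμ0]
              exact add_le_add (mul_le_mul_of_nonneg_left ih hμ0) (hdev k q)
          _ = D / (1-μ) := by field_simp; ring
  have hX : ∀ (k : Fin K) q, ‖xb q - x k q‖ ≤ |η| * q * (D / (1 - μ)) := by
    intro k q
    induction q with
    | zero => simp [hx0, hxb0]
    | succ q ih =>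
        have he : xb (q+1) - x k (q+1) = (xb q - x k q) + η • (m k (q+1) - mb (q+1)) := by
          rw [hxrec, hxbrec]; module
        push_cast
        calc ‖xb (q+1) - x k (q+1)‖ ≤ ‖xb q - x k q‖ + ‖η • (m k (q+1) - mb (q+1))‖ := by
              rw [he]; exact norm_add_le _ _
          _ ≤ |η| * q * (D / (1-μ)) + |η| * (D / (1-μ)) := by
              rw [norm_smul, Real.norm_eq_abs]
              exact add_le_add ih (mul_le_mul_of_nonneg_left (hM k (q+1)) (abs_nonneg η))
          _ = |η| * ((q:ℝ)+1) * (D / (1-μ)) := by ring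
  intro p hp
  have hterm : ∀ k : Fin K, ‖xb p - x k p‖ ^ 2 ≤ η ^ 2 * P ^ 2 * D ^ 2 / (1 - μ) ^ 2 := by
    intro k
    have h1 : ‖xb p - x k p‖ ≤ |η| * P * (D / (1-μ)) := by
      refine (hX k p).trans ?_
      have : (p:ℝ) ≤ P := by exact_mod_cast hp
      have := mul_le_mul_of_nonneg_left this (abs_nonneg η)
      nlinarith [abs_nonneg η, div_nonneg hD h1μ.le]
    have h2 := pow_le_pow_left₀ (norm_nonneg _) h1 2
    calc ‖xb p - x k p‖ ^ 2 ≤ (|η| * P * (D / (1-μ))) ^ 2 := h2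
      _ = η ^ 2 * P ^ 2 * D ^ 2 / (1 - μ) ^ 2 := by
          rw [mul_pow, mul_pow, div_pow, sq_abs]; ring
  calc (K : ℝ)⁻¹ * ∑ k, ‖xb p - x k p‖ ^ 2
      ≤ (K : ℝ)⁻¹ * ∑ _k : Fin K, (η ^ 2 * P ^ 2 * D ^ 2 / (1 - μ) ^ 2) := by
        exact mul_le_mul_of_nonneg_left (Finset.sum_le_sum fun k _ => hterm k) (by positivity)
    _ = η ^ 2 * P ^ 2 * D ^ 2 / (1 - μ) ^ 2 := by
        rw [Finset.sum_const, Finset.card_fin, nsmul_eq_mul]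
        field_simp
end
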